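/- Let T = S¹ × S¹ ⊂ ℝ⁴ be the standard torus. For every positive integer n and every pair of n-tuples (P₁, …, Pₙ) and (Q₁, …, Qₙ) of pairwise distinct points of T, there exists a birational diffeomorphism φ of T such that φ(Pⱼ) = Qⱼ for every j = 1, …, n. In other words, the group of birational diffeomorphisms of the torus acts infinitely transitively on T. -/

import Mathlib

/-- The standard torus `T = S¹ × S¹ ⊂ ℝ⁴`, viewed inside euclidean `ℝ⁴`. -/
def stdTorus : Set (EuclideanSpace ℝ (Fin 4)) :=
  {x | x 0 ^ 2 + x 1 ^ 2 = 1 ∧ x 2 ^ 2 + x 3 ^ 2 = 1}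

/-- `φ` is given on `T` by polynomial fractions `Fᵢ/G` in the ambient coordinates,
where the denominator `G` vanishes at no point of `T`. -/
def HasRegularRep (φ : EuclideanSpace ℝ (Fin 4) → EuclideanSpace ℝ (Fin 4)) : Prop :=
  ∃ (F : Fin 4 → MvPolynomial (Fin 4) ℝ) (G : MvPolynomial (Fin 4) ℝ),
    (∀ x ∈ stdTorus, MvPolynomial.eval (fun i => x i) G ≠ 0) ∧
    ∀ x ∈ stdTorus, ∀ i, φ x i =
      MvPolynomial.eval (fun i => x i) (F i) / MvPolynomial.eval (fun i => x i) G

/-- A birational diffeomorphism of `T`: a bijection of `T` onto itself given on `T` by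
polynomial fractions with nonvanishing denominator, whose inverse bijection admits a
representation of the same form. -/
def IsBirationalDiffeo (φ : EuclideanSpace ℝ (Fin 4) → EuclideanSpace ℝ (Fin 4)) : Prop :=
  Set.BijOn φ stdTorus stdTorus ∧ HasRegularRep φ ∧
    ∃ ψ : EuclideanSpace ℝ (Fin 4) → EuclideanSpace ℝ (Fin 4),
      Set.InvOn ψ φ stdTorus stdTorus ∧ HasRegularRep ψ

/-!
Write a point of `T` as a pair `(z, w)` of unit complex numbers. If `c(t) = (1 - t² + 2ti)/(1 + t²)`
is the Cayley parametrization of the circle and `u` is a real polynomial in the coordinates of `z`,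
the twist `(z, w) ↦ (z, c(u(z)) w)` is a birational diffeomorphism of `T` whose inverse is the
twist by `-u`; conjugating by `(z, w) ↦ (w, z)` gives the twists of the other factor. A polynomial
can take any value at one point of `ℝ²` and vanish at finitely many others, and every unit complex
number is a product of two values of `c` (`c` misses only `-1 = c(1)²`), so two twists rotate the
fibre over one point of the circle by an arbitrary unit while fixing the fibres over finitely many
other points. Three such moves send any point of `T` outside `{(1, c 0), …, (1, c (n-1))}` to
`(1, c n)` while fixing that set. By induction, any `n` distinct points `P` of `T` are mapped to
this normal form by some `ψ_P`, and `ψ_Q⁻¹ ∘ ψ_P` maps `P` to `Q`.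
-/

open MvPolynomial Set Function

namespace MvPolynomial

variable {σ τ K : Type*} [Field K]

theorem exists_eval_div_mul_pow_eq (F : τ → MvPolynomial σ K) (G : MvPolynomial σ K)
    (H : MvPolynomial τ K) :
    ∃ (P : MvPolynomial σ K) (N : ℕ), ∀ x : σ → K, eval x G ≠ 0 →
      eval (fun k => eval x (F k) / eval x G) H * eval x G ^ N = eval x P := by
  induction H using MvPolynomial.induction_on with
  | C a => exact ⟨C a, 0, fun x _ => by simp⟩
  | add p q hp hq =>
    obtain ⟨P₁, N₁, h₁⟩ := hp
    obtain ⟨P₂, N₂, h₂⟩ := hq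
    refine ⟨P₁ * G ^ N₂ + P₂ * G ^ N₁, N₁ + N₂, fun x hx => ?_⟩
    simp only [map_add, map_mul, map_pow, ← h₁ x hx, ← h₂ x hx]
    ring
  | mul_X p k hp =>
    obtain ⟨P, N, h⟩ := hp
    refine ⟨P * F k, N + 1, fun x hx => ?_⟩
    simp only [map_mul, eval_X, ← h x hx]
    field_simp
    ring

theorem exists_eval_div_mul_pow_eq_of_fintype {ι : Type*} [Fintype ι] (F : τ → MvPolynomial σ K)
    (G : MvPolynomial σ K) (H : ι → MvPolynomial τ K) :
    ∃ (P : ι → MvPolynomial σ K) (N : ℕ), ∀ i, ∀ x : σ → K, eval x G ≠ 0 →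
      eval (fun k => eval x (F k) / eval x G) (H i) * eval x G ^ N = eval x (P i) := by
  classical
  choose P N h using fun i => exists_eval_div_mul_pow_eq F G (H i)
  refine ⟨fun i => P i * G ^ (Finset.univ.sup N - N i), Finset.univ.sup N, fun i x hx => ?_⟩
  rw [map_mul, map_pow, ← h i x hx, mul_assoc, ← pow_add,
    Nat.add_sub_cancel' (Finset.le_sup (Finset.mem_univ i))]

theorem exists_eval_eq_one_and_forall_eval_eq_zero {s : Finset (σ → K)} {a : σ → K}
    (ha : a ∉ s) : ∃ q : MvPolynomial σ K, eval a q = 1 ∧ ∀ b ∈ s, eval b q = 0 := by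
  classical
  induction s using Finset.induction_on with
  | empty => exact ⟨1, map_one _, by simp⟩
  | insert b s _ ih =>
    obtain ⟨hab, has⟩ := not_or.1 (Finset.mem_insert.not.1 ha)
    obtain ⟨q, hqa, hqs⟩ := ih has
    obtain ⟨i, hi⟩ := Function.ne_iff.1 hab
    refine ⟨q * C (a i - b i)⁻¹ * (X i - C (b i)), ?_, fun c hc => ?_⟩
    · simp [hqa, sub_ne_zero.2 hi]
    · rcases Finset.mem_insert.1 hc with rfl | hc
      · simp
      · simp [hqs c hc]

end MvPolynomial

local notation "ℝ⁴" => EuclideanSpace ℝ (Fin 4)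

theorem HasRegularRep.comp {φ ψ : ℝ⁴ → ℝ⁴} (hmaps : MapsTo φ stdTorus stdTorus)
    (hφ : HasRegularRep φ) (hψ : HasRegularRep ψ) : HasRegularRep (ψ ∘ φ) := by
  obtain ⟨F, G, hG, hF⟩ := hφ
  obtain ⟨F', G', hG', hF'⟩ := hψ
  -- one power of `G` clears the denominators of `G'` (index `none`) and of every `F' i`
  obtain ⟨P, N, hP⟩ := exists_eval_div_mul_pow_eq_of_fintype F G (Option.elim' G' F')
  have hP' : ∀ x ∈ stdTorus, ∀ o, eval (fun i => x i) (P o) =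
      eval (fun i => φ x i) (Option.elim' G' F' o) * eval (fun i => x i) G ^ N := by
    intro x hx o
    rw [← hP o _ (hG x hx)]
    simp only [hF x hx]
  refine ⟨fun i => P (some i), P none, fun x hx => ?_, fun x hx i => ?_⟩
  · rw [hP' x hx]
    exact mul_ne_zero (hG' _ (hmaps hx)) (pow_ne_zero _ (hG x hx))
  · rw [hP' x hx, hP' x hx, Function.comp_apply, hF' _ (hmaps hx),
      mul_div_mul_right _ _ (pow_ne_zero _ (hG x hx))]
    rfl

theorem hasRegularRep_id : HasRegularRep id :=
  ⟨X, 1, by simp, by simp⟩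

namespace IsBirationalDiffeo

theorem of_invOn {φ ψ : ℝ⁴ → ℝ⁴} (hφ : MapsTo φ stdTorus stdTorus)
    (hψ : MapsTo ψ stdTorus stdTorus) (h : InvOn ψ φ stdTorus stdTorus)
    (hφr : HasRegularRep φ) (hψr : HasRegularRep ψ) : IsBirationalDiffeo φ :=
  ⟨h.bijOn hφ hψ, hφr, ψ, h, hψr⟩

theorem id : IsBirationalDiffeo id :=
  of_invOn (mapsTo_id _) (mapsTo_id _) (invOn_id _) hasRegularRep_id hasRegularRep_id

theorem exists_invOn {φ : ℝ⁴ → ℝ⁴} (hφ : IsBirationalDiffeo φ) :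
    ∃ ψ, IsBirationalDiffeo ψ ∧ InvOn ψ φ stdTorus stdTorus := by
  obtain ⟨hbij, hφr, ψ, h, hψr⟩ := hφ
  exact ⟨ψ, of_invOn (h.1.mapsTo hbij.surjOn) hbij.mapsTo h.symm hψr hφr, h⟩

theorem comp {φ ψ : ℝ⁴ → ℝ⁴} (hψ : IsBirationalDiffeo ψ) (hφ : IsBirationalDiffeo φ) :
    IsBirationalDiffeo (ψ ∘ φ) := by
  obtain ⟨hφbij, hφr, φ', hφ', hφ'r⟩ := hφ
  obtain ⟨hψbij, hψr, ψ', hψ', hψ'r⟩ := hψ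
  have hφ'maps := hφ'.1.mapsTo hφbij.surjOn
  have hψ'maps := hψ'.1.mapsTo hψbij.surjOn
  exact of_invOn (hψbij.mapsTo.comp hφbij.mapsTo) (hφ'maps.comp hψ'maps)
    (hφ'.comp hψ' hφbij.mapsTo hψ'maps) (HasRegularRep.comp hφbij.mapsTo hφr hψr)
    (HasRegularRep.comp hψ'maps hψ'r hφ'r)

end IsBirationalDiffeo

noncomputable def cayley (t : ℝ) : ℂ := ⟨(1 - t ^ 2) / (1 + t ^ 2), 2 * t / (1 + t ^ 2)⟩

section Cayley

open Complex

theorem normSq_cayley (t : ℝ) : normSq (cayley t) = 1 := by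
  have : 1 + t ^ 2 ≠ 0 := by positivity
  simp only [cayley, normSq_mk]
  field_simp
  ring

theorem cayley_zero : cayley 0 = 1 := by
  simp [cayley, Complex.ext_iff]

theorem cayley_one : cayley 1 = I := by
  norm_num [cayley, Complex.ext_iff]

theorem cayley_neg_mul_self (t : ℝ) : cayley (-t) * cayley t = 1 := by
  have : 1 + t ^ 2 ≠ 0 := by positivity
  simp only [cayley, Complex.ext_iff, mul_re, mul_im, one_re, one_im]
  constructor <;> field_simp <;> ring

theorem exists_cayley_eq {z : ℂ} (hz : normSq z = 1) (hne : z ≠ -1) : ∃ t, cayley t = z := by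
  rw [normSq_apply] at hz
  have hre : 1 + z.re ≠ 0 := by
    intro h
    refine hne (Complex.ext ?_ ?_) <;> simp <;> nlinarith
  refine ⟨z.im / (1 + z.re), Complex.ext ?_ ?_⟩ <;> simp only [cayley] <;> field_simp
  · linear_combination (-(1 + z.re)) * hz
  · linear_combination (-z.im) * hz

theorem exists_cayley_mul_cayley_eq {z : ℂ} (hz : normSq z = 1) :
    ∃ t t', cayley t * cayley t' = z := by
  by_cases hne : z = -1
  · exact ⟨1, 1, by rw [cayley_one, I_mul_I, hne]⟩
  · obtain ⟨t, rfl⟩ := exists_cayley_eq hz hne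
    exact ⟨t, 0, by rw [cayley_zero, mul_one]⟩

theorem cayley_natCast_injective : Injective (fun n : ℕ => cayley n) := by
  intro m n h
  have hre := congrArg re h
  simp only [cayley] at hre
  rw [div_eq_div_iff (by positivity) (by positivity)] at hre
  have hsq : (m : ℝ) ^ 2 = (n : ℝ) ^ 2 := by linarith
  exact_mod_cast (sq_eq_sq₀ (Nat.cast_nonneg m) (Nat.cast_nonneg n)).1 hsq

end Cayley

def reIm (z : ℂ) : Fin 2 → ℝ := ![z.re, z.im]

theorem reIm_injective : Injective reIm := fun _ _ h =>
  Complex.ext (congrFun h 0) (congrFun h 1)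

namespace Torus

def fst (x : ℝ⁴) : ℂ := ⟨x 0, x 1⟩

def snd (x : ℝ⁴) : ℂ := ⟨x 2, x 3⟩

def mk (z w : ℂ) : ℝ⁴ := WithLp.toLp 2 ![z.re, z.im, w.re, w.im]

@[simp] theorem fst_mk (z w : ℂ) : fst (mk z w) = z := rfl

@[simp] theorem snd_mk (z w : ℂ) : snd (mk z w) = w := rfl

@[simp] theorem mk_fst_snd (x : ℝ⁴) : mk (fst x) (snd x) = x := by
  ext i
  fin_cases i <;> rfl

theorem mem_stdTorus_iff {x : ℝ⁴} :
    x ∈ stdTorus ↔ Complex.normSq (fst x) = 1 ∧ Complex.normSq (snd x) = 1 := by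
  simp [stdTorus, fst, snd, Complex.normSq_mk, sq]

theorem mk_mem_stdTorus_iff {z w : ℂ} :
    mk z w ∈ stdTorus ↔ Complex.normSq z = 1 ∧ Complex.normSq w = 1 := by
  rw [mem_stdTorus_iff, fst_mk, snd_mk]

noncomputable def twist (u : MvPolynomial (Fin 2) ℝ) (x : ℝ⁴) : ℝ⁴ :=
  mk (fst x) (cayley (eval (reIm (fst x)) u) * snd x)

theorem twist_neg_twist (u : MvPolynomial (Fin 2) ℝ) (x : ℝ⁴) : twist (-u) (twist u x) = x := by
  simp [twist, ← mul_assoc, cayley_neg_mul_self]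

theorem mapsTo_twist (u : MvPolynomial (Fin 2) ℝ) : MapsTo (twist u) stdTorus stdTorus := by
  intro x hx
  rw [mem_stdTorus_iff] at hx
  simp [twist, mk_mem_stdTorus_iff, normSq_cayley, hx]

theorem hasRegularRep_twist (u : MvPolynomial (Fin 2) ℝ) : HasRegularRep (twist u) := by
  set v := rename (![0, 1] : Fin 2 → Fin 4) u
  refine ⟨![X 0 * (1 + v ^ 2), X 1 * (1 + v ^ 2), (1 - v ^ 2) * X 2 - C 2 * v * X 3,
    C 2 * v * X 2 + (1 - v ^ 2) * X 3], 1 + v ^ 2, fun x _ => ?_, fun x _ i => ?_⟩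
  · simp only [map_add, map_one, map_pow]
    positivity
  have hv : eval (fun i => x i) v = eval (reIm (fst x)) u := by
    have hc : ((fun i => x i) ∘ ![0, 1] : Fin 2 → ℝ) = reIm (fst x) := by
      funext i
      fin_cases i <;> rfl
    rw [eval_rename, hc]
  have : 1 + eval (reIm (fst x)) u ^ 2 ≠ 0 := by positivity
  fin_cases i <;> simp [twist, mk, fst, snd, cayley, hv] <;> field_simp; ring

theorem isBirationalDiffeo_twist (u : MvPolynomial (Fin 2) ℝ) : IsBirationalDiffeo (twist u) :=
  .of_invOn (mapsTo_twist u) (mapsTo_twist (-u))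
    ⟨fun x _ => twist_neg_twist u x, fun x _ => by simpa using twist_neg_twist (-u) x⟩
    (hasRegularRep_twist u) (hasRegularRep_twist (-u))

def swap (x : ℝ⁴) : ℝ⁴ := mk (snd x) (fst x)

theorem swap_swap (x : ℝ⁴) : swap (swap x) = x := by
  simp [swap]

theorem mapsTo_swap : MapsTo swap stdTorus stdTorus := fun x hx => by
  rw [mem_stdTorus_iff] at hx
  exact mk_mem_stdTorus_iff.2 hx.symm

theorem hasRegularRep_swap : HasRegularRep swap :=
  ⟨![X 2, X 3, X 0, X 1], 1, by simp, fun x _ i => by fin_cases i <;> simp [swap, mk, fst, snd]⟩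

theorem isBirationalDiffeo_swap : IsBirationalDiffeo swap :=
  .of_invOn mapsTo_swap mapsTo_swap ⟨fun x _ => swap_swap x, fun x _ => swap_swap x⟩
    hasRegularRep_swap hasRegularRep_swap

theorem exists_isBirationalDiffeo_mul_snd (S : Finset ℂ) {a : ℂ} (ha : a ∉ S) {r : ℂ}
    (hr : Complex.normSq r = 1) :
    ∃ φ, IsBirationalDiffeo φ ∧ (∀ x, fst x ∈ S → φ x = x) ∧
      ∀ x, fst x = a → φ x = mk a (r * snd x) := by
  obtain ⟨q, hqa, hqS⟩ := exists_eval_eq_one_and_forall_eval_eq_zero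
    (s := S.image reIm) (a := reIm a) (by simpa [reIm_injective.eq_iff] using ha)
  obtain ⟨t, t', rfl⟩ := exists_cayley_mul_cayley_eq hr
  refine ⟨twist (C t * q) ∘ twist (C t' * q),
    (isBirationalDiffeo_twist _).comp (isBirationalDiffeo_twist _), fun x hx => ?_, ?_⟩
  · have hq := hqS _ (Finset.mem_image_of_mem reIm hx)
    simp [twist, hq, cayley_zero]
  · rintro x rfl
    simp [twist, hqa, mul_assoc]

theorem exists_isBirationalDiffeo_mul_fst (S : Finset ℂ) {a : ℂ} (ha : a ∉ S) {r : ℂ}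
    (hr : Complex.normSq r = 1) :
    ∃ φ, IsBirationalDiffeo φ ∧ (∀ x, snd x ∈ S → φ x = x) ∧
      ∀ x, snd x = a → φ x = mk (r * fst x) a := by
  obtain ⟨φ, hφ, hS, ha⟩ := exists_isBirationalDiffeo_mul_snd S ha hr
  refine ⟨swap ∘ φ ∘ swap, isBirationalDiffeo_swap.comp (hφ.comp isBirationalDiffeo_swap),
    fun x hx => ?_, fun x hx => ?_⟩
  · rw [comp_apply, comp_apply, hS (swap x) hx, swap_swap]
  · rw [comp_apply, comp_apply, ha (swap x) hx]
    simp [swap, hx]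

noncomputable def normalPoint (k : ℕ) : ℝ⁴ := mk 1 (cayley k)

theorem exists_fst_apply_ne_one (n : ℕ) {R : ℝ⁴} (hR : ∀ k < n, R ≠ normalPoint k) :
    ∃ φ, IsBirationalDiffeo φ ∧ (∀ k < n, φ (normalPoint k) = normalPoint k) ∧
      fst (φ R) ≠ 1 := by
  by_cases h1 : fst R = 1
  · have hS : snd R ∉ (Finset.range n).image (fun k : ℕ => cayley k) := by
      simp only [Finset.mem_image, Finset.mem_range, not_exists, not_and]
      intro k hk hRk
      exact hR k hk (by rw [← mk_fst_snd R, h1, ← hRk, normalPoint])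
    obtain ⟨φ, hφ, hfix, hRφ⟩ := exists_isBirationalDiffeo_mul_fst _ hS Complex.normSq_I
    refine ⟨φ, hφ, fun k hk => hfix _ (Finset.mem_image_of_mem _ (Finset.mem_range.2 hk)), ?_⟩
    simp [hRφ R rfl, h1, Complex.ext_iff]
  · exact ⟨id, .id, fun _ _ => rfl, h1⟩

theorem exists_apply_eq_mk_cayley (n : ℕ) {R : ℝ⁴} (hR : R ∈ stdTorus) (h1 : fst R ≠ 1) :
    ∃ φ, IsBirationalDiffeo φ ∧ (∀ k < n, φ (normalPoint k) = normalPoint k) ∧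
      φ R = mk (fst R) (cayley n) := by
  have hsnd : snd R ≠ 0 := fun h0 => by simp [mem_stdTorus_iff, h0] at hR
  obtain ⟨φ, hφ, hfix, hRφ⟩ := exists_isBirationalDiffeo_mul_snd {1} (a := fst R)
    (r := cayley n * (snd R)⁻¹) (by simpa [eq_comm] using h1)
    (by simp [normSq_cayley, (mem_stdTorus_iff.1 hR).2])
  refine ⟨φ, hφ, fun k _ => hfix _ (Finset.mem_singleton_self 1), ?_⟩
  rw [hRφ R rfl, mul_assoc, inv_mul_cancel₀ hsnd, mul_one]

theorem exists_apply_mk_cayley_eq_normalPoint (n : ℕ) {a : ℂ} (ha : Complex.normSq a = 1) :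
    ∃ φ, IsBirationalDiffeo φ ∧ (∀ k < n, φ (normalPoint k) = normalPoint k) ∧
      φ (mk a (cayley n)) = normalPoint n := by
  have ha0 : a ≠ 0 := fun h0 => by simp [h0] at ha
  have hS : (cayley n : ℂ) ∉ (Finset.range n).image (fun k : ℕ => cayley k) := by
    simp [cayley_natCast_injective.eq_iff]
  obtain ⟨φ, hφ, hfix, hnφ⟩ := exists_isBirationalDiffeo_mul_fst _ hS (r := a⁻¹) (by simp [ha])
  refine ⟨φ, hφ, fun k hk => hfix _ (Finset.mem_image_of_mem _ (Finset.mem_range.2 hk)), ?_⟩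
  rw [hnφ _ (snd_mk _ _), fst_mk, inv_mul_cancel₀ ha0, normalPoint]

theorem exists_apply_eq_normalPoint_of_ne_normalPoint (n : ℕ) {R : ℝ⁴} (hR : R ∈ stdTorus)
    (hRn : ∀ k < n, R ≠ normalPoint k) :
    ∃ φ, IsBirationalDiffeo φ ∧ (∀ k < n, φ (normalPoint k) = normalPoint k) ∧
      φ R = normalPoint n := by
  obtain ⟨φ₁, h₁, fix₁, hne⟩ := exists_fst_apply_ne_one n hRn
  have hR₁ : φ₁ R ∈ stdTorus := h₁.1.mapsTo hR
  obtain ⟨φ₂, h₂, fix₂, e₂⟩ := exists_apply_eq_mk_cayley n hR₁ hne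
  obtain ⟨φ₃, h₃, fix₃, e₃⟩ := exists_apply_mk_cayley_eq_normalPoint n (mem_stdTorus_iff.1 hR₁).1
  refine ⟨φ₃ ∘ φ₂ ∘ φ₁, h₃.comp (h₂.comp h₁), fun k hk => ?_, ?_⟩
  · simp only [comp_apply, fix₁ k hk, fix₂ k hk, fix₃ k hk]
  · simp only [comp_apply, e₂, e₃]

theorem exists_isBirationalDiffeo_apply_eq_normalPoint {n : ℕ} (P : Fin n → ℝ⁴)
    (hP : ∀ j, P j ∈ stdTorus) (hinj : Injective P) :
    ∃ φ, IsBirationalDiffeo φ ∧ ∀ j, φ (P j) = normalPoint j := by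
  induction n with
  | zero => exact ⟨id, .id, finZeroElim⟩
  | succ n ih =>
    obtain ⟨φ, hφ, hφP⟩ := ih (P ∘ Fin.castSucc) (fun j => hP _)
      (hinj.comp (Fin.castSucc_injective n))
    have hlast : ∀ k < n, φ (P (Fin.last n)) ≠ normalPoint k := by
      intro k hk h
      rw [← hφP ⟨k, hk⟩] at h
      exact (Fin.castSucc_lt_last ⟨k, hk⟩).ne' (hinj (hφ.1.injOn (hP _) (hP _) h))
    obtain ⟨ψ, hψ, hfix, hψlast⟩ :=
      exists_apply_eq_normalPoint_of_ne_normalPoint n (hφ.1.mapsTo (hP _)) hlast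
    refine ⟨ψ ∘ φ, hψ.comp hφ, Fin.lastCases ?_ fun j => ?_⟩
    · simpa using hψlast
    · simpa using (congrArg ψ (hφP j)).trans (hfix j j.isLt)

end Torus

theorem stmt8_general (n : ℕ) (P Q : Fin n → EuclideanSpace ℝ (Fin 4))
    (hP : ∀ j, P j ∈ stdTorus) (hQ : ∀ j, Q j ∈ stdTorus)
    (hPinj : Function.Injective P) (hQinj : Function.Injective Q) :
    ∃ φ, IsBirationalDiffeo φ ∧ ∀ j, φ (P j) = Q j := by
  obtain ⟨f, hf, hfP⟩ := Torus.exists_isBirationalDiffeo_apply_eq_normalPoint P hP hPinj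
  obtain ⟨g, hg, hgQ⟩ := Torus.exists_isBirationalDiffeo_apply_eq_normalPoint Q hQ hQinj
  obtain ⟨g', hg', hinv⟩ := hg.exists_invOn
  exact ⟨g' ∘ f, hg'.comp hf, fun j => by rw [comp_apply, hfP j, ← hgQ j, hinv.1 (hQ j)]⟩

/-- the group of birational diffeomorphisms of the standard torus
`T = S¹ × S¹ ⊂ ℝ⁴` acts infinitely transitively: any `n`-tuple of pairwise distinct
points of `T` is mapped to any other such `n`-tuple by a birational diffeomorphism. -/
theorem stmt8 (n : ℕ) (hn : 0 < n) (P Q : Fin n → EuclideanSpace ℝ (Fin 4))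
    (hP : ∀ j, P j ∈ stdTorus) (hQ : ∀ j, Q j ∈ stdTorus)
    (hPinj : Function.Injective P) (hQinj : Function.Injective Q) :
    ∃ φ, IsBirationalDiffeo φ ∧ ∀ j, φ (P j) = Q j :=
  stmt8_general n P Q hP hQ hPinj hQinj
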